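/- For the inverse flow u_t = -u/‖u‖ + p/‖p‖ with p ∈ ∂J(u), one has d/dt J(u(t)) = ‖p‖ - J(u)/‖u‖ ≥ 0 and (1/2) d/dt ‖u(t)‖² = J(u)/‖p‖ - ‖u‖ ≤ 0, with equalities if and only if u is an eigenfunction. -/

import Mathlib

open RealInnerProductSpace

def IsSubgradient {N : ℕ} (J : EuclideanSpace ℝ (Fin N) → ℝ)
    (u p : EuclideanSpace ℝ (Fin N)) : Prop :=
  ∀ v, J v - J u ≥ ⟪p, v - u⟫

/-!
Testing the subgradient inequality at `0` and `2u` shows `J u = ⟪p, u⟫`, and testing it at `-u`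
shows `⟪p, u⟫ ≥ 0`. Both derivatives are then affine in `⟪p, u⟫`, so their signs are the
Cauchy–Schwarz inequality `⟪p, u⟫ ≤ ‖p‖ ‖u‖`, and they vanish exactly in its equality case, which
for `⟪p, u⟫ ≥ 0` means that `p` is a multiple of `u`.
-/

section

variable {E : Type*} [NormedAddCommGroup E] [InnerProductSpace ℝ E]

theorem eq_inner_of_subgradient_of_posHomogeneous {J : E → ℝ} {u p : E}
    (hhom : ∀ α : ℝ, 0 ≤ α → ∀ w, J (α • w) = α * J w)
    (hsub : ∀ v, J v - J u ≥ ⟪p, v - u⟫) : J u = ⟪p, u⟫ := by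
  have hJ0 : J 0 = 0 := by simpa using hhom 0 le_rfl u
  have hzero := hsub 0
  have htwo := hsub ((2 : ℝ) • u)
  rw [hhom 2 zero_le_two, two_smul, add_sub_cancel_right] at htwo
  simp only [hJ0, zero_sub, inner_neg_right] at hzero
  linarith

theorem inner_nonneg_of_subgradient_of_neg_eq {J : E → ℝ} {u p : E}
    (heven : J (-u) = J u) (hsub : ∀ v, J v - J u ≥ ⟪p, v - u⟫) : 0 ≤ ⟪p, u⟫ := by
  have h := hsub (-u)
  rw [heven, sub_self, ← neg_add', inner_neg_right, ← two_smul ℝ u,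
    real_inner_smul_right] at h
  linarith

theorem real_inner_eq_norm_mul_norm_iff_exists_smul {u p : E} (hu : u ≠ 0)
    (h : 0 ≤ ⟪p, u⟫) : ⟪p, u⟫ = ‖p‖ * ‖u‖ ↔ ∃ lam : ℝ, p = lam • u := by
  have hcs := (norm_inner_eq_norm_tfae ℝ u p).out 0 2
  rwa [Real.norm_eq_abs, real_inner_comm, abs_of_nonneg h, mul_comm, or_iff_right hu] at hcs

noncomputable def inverseFlowField (u p : E) : E := -‖u‖⁻¹ • u + ‖p‖⁻¹ • p

theorem inner_snd_inverseFlowField (u p : E) :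
    ⟪p, inverseFlowField u p⟫ = ‖p‖ - ⟪p, u⟫ / ‖u‖ := by
  rw [inverseFlowField, inner_add_right, real_inner_smul_right, real_inner_smul_right,
    real_inner_self_eq_norm_sq]
  rcases eq_or_ne p 0 with rfl | hp
  · simp
  · field_simp
    ring

theorem inner_fst_inverseFlowField (u p : E) :
    ⟪u, inverseFlowField u p⟫ = ⟪p, u⟫ / ‖p‖ - ‖u‖ := by
  rw [inverseFlowField, inner_add_right, real_inner_smul_right, real_inner_smul_right,
    real_inner_self_eq_norm_sq, real_inner_comm]
  rcases eq_or_ne u 0 with rfl | hu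
  · simp
  · field_simp
    ring

theorem inner_snd_inverseFlowField_nonneg (u p : E) : 0 ≤ ⟪p, inverseFlowField u p⟫ := by
  rw [inner_snd_inverseFlowField, sub_nonneg]
  exact div_le_of_le_mul₀ (norm_nonneg u) (norm_nonneg p) (real_inner_le_norm p u)

theorem inner_fst_inverseFlowField_nonpos (u p : E) : ⟪u, inverseFlowField u p⟫ ≤ 0 := by
  rw [inner_fst_inverseFlowField, sub_nonpos]
  exact div_le_of_le_mul₀ (norm_nonneg p) (norm_nonneg u)
    ((real_inner_le_norm p u).trans_eq (mul_comm _ _))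

theorem inner_snd_inverseFlowField_eq_zero_iff {u : E} (hu : u ≠ 0) (p : E) :
    ⟪p, inverseFlowField u p⟫ = 0 ↔ ⟪p, u⟫ = ‖p‖ * ‖u‖ := by
  rw [inner_snd_inverseFlowField, sub_eq_zero, eq_comm, div_eq_iff (norm_ne_zero_iff.mpr hu)]

theorem inner_fst_inverseFlowField_eq_zero_iff (u : E) {p : E} (hp : p ≠ 0) :
    ⟪u, inverseFlowField u p⟫ = 0 ↔ ⟪p, u⟫ = ‖p‖ * ‖u‖ := by
  rw [inner_fst_inverseFlowField, sub_eq_zero, div_eq_iff (norm_ne_zero_iff.mpr hp), mul_comm]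

end

theorem stmt12_general {N : ℕ} (J : EuclideanSpace ℝ (Fin N) → ℝ)
    (hhom : ∀ (α : ℝ) (w : EuclideanSpace ℝ (Fin N)), J (α • w) = |α| * J w)
    (u p : ℝ → EuclideanSpace ℝ (Fin N))
    (hp : ∀ t, IsSubgradient J (u t) (p t))
    (hu0 : ∀ t, ‖u t‖ ≠ 0) (hp0 : ∀ t, ‖p t‖ ≠ 0) :
    ∀ t, (⟪p t, -(‖u t‖)⁻¹ • u t + (‖p t‖)⁻¹ • p t⟫ = ‖p t‖ - J (u t) / ‖u t‖)
      ∧ 0 ≤ ⟪p t, -(‖u t‖)⁻¹ • u t + (‖p t‖)⁻¹ • p t⟫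
      ∧ (⟪u t, -(‖u t‖)⁻¹ • u t + (‖p t‖)⁻¹ • p t⟫ = J (u t) / ‖p t‖ - ‖u t‖)
      ∧ ⟪u t, -(‖u t‖)⁻¹ • u t + (‖p t‖)⁻¹ • p t⟫ ≤ 0
      ∧ (⟪p t, -(‖u t‖)⁻¹ • u t + (‖p t‖)⁻¹ • p t⟫ = 0 ↔
          ∃ lam : ℝ, p t = lam • u t)
      ∧ (⟪u t, -(‖u t‖)⁻¹ • u t + (‖p t‖)⁻¹ • p t⟫ = 0 ↔
          ∃ lam : ℝ, p t = lam • u t) := by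
  intro t
  have hu : u t ≠ 0 := norm_ne_zero_iff.mp (hu0 t)
  have hp' : p t ≠ 0 := norm_ne_zero_iff.mp (hp0 t)
  have hJ : J (u t) = ⟪p t, u t⟫ :=
    eq_inner_of_subgradient_of_posHomogeneous
      (fun α hα w => by rw [hhom, abs_of_nonneg hα]) (hp t)
  have heven : J (-u t) = J (u t) := by simpa using hhom (-1) (u t)
  have hcs := real_inner_eq_norm_mul_norm_iff_exists_smul hu
    (inner_nonneg_of_subgradient_of_neg_eq heven (hp t))
  rw [hJ]
  exact ⟨inner_snd_inverseFlowField _ _, inner_snd_inverseFlowField_nonneg _ _,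
    inner_fst_inverseFlowField _ _, inner_fst_inverseFlowField_nonpos _ _,
    (inner_snd_inverseFlowField_eq_zero_iff hu _).trans hcs,
    (inner_fst_inverseFlowField_eq_zero_iff _ hp').trans hcs⟩

theorem stmt12 {N : ℕ} (J : EuclideanSpace ℝ (Fin N) → ℝ)
    (hconv : ConvexOn ℝ Set.univ J)
    (hhom : ∀ (α : ℝ) (w : EuclideanSpace ℝ (Fin N)), J (α • w) = |α| * J w)
    (u p : ℝ → EuclideanSpace ℝ (Fin N))
    (hp : ∀ t, IsSubgradient J (u t) (p t))
    (hu0 : ∀ t, ‖u t‖ ≠ 0) (hp0 : ∀ t, ‖p t‖ ≠ 0)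
    (hflow : ∀ t, HasDerivAt u (-(‖u t‖)⁻¹ • u t + (‖p t‖)⁻¹ • p t) t)
    (hchainJ : ∀ t, HasDerivAt (fun s => J (u s))
      ⟪p t, -(‖u t‖)⁻¹ • u t + (‖p t‖)⁻¹ • p t⟫ t)
    (hchainN : ∀ t, HasDerivAt (fun s => (1/2 : ℝ) * ‖u s‖ ^ 2)
      ⟪u t, -(‖u t‖)⁻¹ • u t + (‖p t‖)⁻¹ • p t⟫ t) :
    ∀ t, (⟪p t, -(‖u t‖)⁻¹ • u t + (‖p t‖)⁻¹ • p t⟫ = ‖p t‖ - J (u t) / ‖u t‖)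
      ∧ 0 ≤ ⟪p t, -(‖u t‖)⁻¹ • u t + (‖p t‖)⁻¹ • p t⟫
      ∧ (⟪u t, -(‖u t‖)⁻¹ • u t + (‖p t‖)⁻¹ • p t⟫ = J (u t) / ‖p t‖ - ‖u t‖)
      ∧ ⟪u t, -(‖u t‖)⁻¹ • u t + (‖p t‖)⁻¹ • p t⟫ ≤ 0
      ∧ (⟪p t, -(‖u t‖)⁻¹ • u t + (‖p t‖)⁻¹ • p t⟫ = 0 ↔
          ∃ lam : ℝ, p t = lam • u t)
      ∧ (⟪u t, -(‖u t‖)⁻¹ • u t + (‖p t‖)⁻¹ • p t⟫ = 0 ↔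
          ∃ lam : ℝ, p t = lam • u t) :=
  stmt12_general J hhom u p hp hu0 hp0
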